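/- arXiv:0812.1913 — 4 statements merged into one kernel-verified Lean document; each statement's English description precedes it below -/
import Mathlib

section
/- Let d ≥ 1 be an integer, 0 < α < d, and let f be the Riesz kernel of order α on ℝ^d. Then there is a constant D_{α,d} > 0, depending only on α and d, such that for all u, v > 0 and all y, z ∈ ℝ^d: J_f(u,v,y,z) = ∫_{ℝ^d}∫_{ℝ^d} p_u(x−y) p_v(x'−z) f(x−x') dx dx' ≤ D_{α,d} (u+v)^{−(d−α)/2}. -/
/-!
Integrate first against the heat kernel of the larger time `t = max u v ≥ (u + v) / 2`: it
suffices to bound `∫ p_t(x' - z) |x - x'|^(α-d) dx'` by `C t^((α-d)/2)` uniformly in `x, z`.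
On the ball of radius `√t` around `x`, bound `p_t` by its maximum `(2πt)^(-d/2)` and use that
`|·|^(α-d)` is integrable near `0`, with `∫_{|w|<r} |w|^(α-d) = r^α ∫_{|w|<1} |w|^(α-d)` by
scaling; off that ball, bound `|x - x'|^(α-d)` by `t^((α-d)/2)` and use that `p_t` has mass one.
-/

open MeasureTheory

/-- The heat kernel `p_t(x) = (2πt)^{-d/2} exp(-|x|²/(2t))` on `ℝ^d`. -/
noncomputable def heatKernel (d : ℕ) (t : ℝ) (x : EuclideanSpace ℝ (Fin d)) : ℝ :=
  (2 * Real.pi * t) ^ (-(d : ℝ) / 2) * Real.exp (-‖x‖ ^ 2 / (2 * t))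

/-- The Riesz kernel of order `α`:
`f(x) = γ_{α,d} |x|^{α-d}`, `γ_{α,d} = Γ((d-α)/2) 2^{-α} π^{-d/2} / Γ(α/2)`. -/
noncomputable def rieszKernel (d : ℕ) (α : ℝ) (x : EuclideanSpace ℝ (Fin d)) : ℝ :=
  (Real.Gamma (((d : ℝ) - α) / 2) * 2 ^ (-α) * Real.pi ^ (-(d : ℝ) / 2) / Real.Gamma (α / 2))
    * ‖x‖ ^ (α - (d : ℝ))

/-- `J_f(u,v,y,z) = ∫∫ p_u(x-y) p_v(x'-z) f(x-x') dx dx'` (as a Lebesgue integral in `[0,∞]`). -/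
noncomputable def Jf (d : ℕ) (f : EuclideanSpace ℝ (Fin d) → ℝ) (u v : ℝ)
    (y z : EuclideanSpace ℝ (Fin d)) : ENNReal :=
  ∫⁻ x, ∫⁻ x', ENNReal.ofReal (heatKernel d u (x - y) * heatKernel d v (x' - z) * f (x - x'))

open Metric ENNReal

section NormRpow

variable {E : Type*} [NormedAddCommGroup E] [NormedSpace ℝ E] [FiniteDimensional ℝ E]
  [MeasurableSpace E] [BorelSpace E] (μ : Measure E) [μ.IsAddHaarMeasure]

theorem lintegral_ball_norm_rpow {r : ℝ} (hr : 0 < r) (e : ℝ) :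
    ∫⁻ x in ball 0 r, ENNReal.ofReal (‖x‖ ^ e) ∂μ
      = ENNReal.ofReal (r ^ (Module.finrank ℝ E + e))
        * ∫⁻ x in ball 0 1, ENNReal.ofReal (‖x‖ ^ e) ∂μ := by
  let g : ℝ → E → ℝ≥0∞ := fun s => (ball 0 s).indicator fun x => ENNReal.ofReal (‖x‖ ^ e)
  have hg : ∀ s, Measurable (g s) := fun s =>
    (measurable_norm.pow_const e).ennreal_ofReal.indicator measurableSet_ball
  have hscale : ∀ w : E, g r (r • w) = ENNReal.ofReal (r ^ e) * g 1 w := fun w => by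
    dsimp only [g]
    by_cases hw : w ∈ ball (0 : E) 1
    · have hrw : r • w ∈ ball (0 : E) r := by simpa [norm_smul, abs_of_pos hr, hr] using hw
      rw [Set.indicator_of_mem hrw, Set.indicator_of_mem hw, norm_smul, Real.norm_of_nonneg hr.le,
        Real.mul_rpow hr.le (norm_nonneg w), ENNReal.ofReal_mul (by positivity)]
    · have hrw : r • w ∉ ball (0 : E) r := by simpa [norm_smul, abs_of_pos hr, hr] using hw
      rw [Set.indicator_of_notMem hrw, Set.indicator_of_notMem hw, mul_zero]
  have hchange : ∫⁻ w, g r (r • w) ∂μ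
      = ENNReal.ofReal |(r ^ Module.finrank ℝ E)⁻¹| * ∫⁻ x, g r x ∂μ := by
    rw [← lintegral_map (hg r) (measurable_const_smul r), Measure.map_addHaar_smul μ hr.ne',
      lintegral_smul_measure, smul_eq_mul]
  simp_rw [hscale, lintegral_const_mul _ (hg 1), g, lintegral_indicator measurableSet_ball]
    at hchange
  rw [Real.rpow_add hr, ENNReal.ofReal_mul (by positivity), mul_assoc, hchange,
    ← mul_assoc, ← ENNReal.ofReal_mul (by positivity), Real.rpow_natCast,
    abs_of_pos (by positivity), mul_inv_cancel₀ (by positivity), ENNReal.ofReal_one, one_mul]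

theorem lintegral_ball_norm_rpow_lt_top (hE : 1 ≤ Module.finrank ℝ E) {e : ℝ}
    (he : -(Module.finrank ℝ E : ℝ) < e) :
    ∫⁻ x in ball 0 1, ENNReal.ofReal (‖x‖ ^ e) ∂μ < ∞ := by
  refine (integrableOn_ball_of_norm_le_rpow (C := 1) (α := -e) hE (by linarith)
    (ae_of_all _ fun x => ?_) (measurable_norm.pow_const e).aestronglyMeasurable).lintegral_lt_top
  rw [neg_neg, one_mul, Real.norm_of_nonneg (by positivity)]

end NormRpow

theorem Real.sqrt_rpow_eq_rpow_div_two {x : ℝ} (hx : 0 ≤ x) (s : ℝ) :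
    Real.sqrt x ^ s = x ^ (s / 2) := by
  rw [Real.sqrt_eq_rpow, ← Real.rpow_mul hx, one_div_mul_eq_div]

theorem Real.rpow_neg_le_two_rpow_mul_add_rpow_neg {u v a : ℝ} (hu : 0 < u) (huv : u ≤ v)
    (ha : 0 ≤ a) : v ^ (-a) ≤ 2 ^ a * (u + v) ^ (-a) := by
  have hv : 0 < v := hu.trans_le huv
  calc v ^ (-a) = 2 ^ a * (2 * v) ^ (-a) := by
        rw [Real.mul_rpow zero_le_two hv.le, ← mul_assoc, Real.rpow_neg zero_le_two,
          mul_inv_cancel₀ (by positivity), one_mul]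
    _ ≤ 2 ^ a * (u + v) ^ (-a) := by
        refine mul_le_mul_of_nonneg_left ?_ (by positivity)
        exact Real.rpow_le_rpow_of_nonpos (by positivity) (by linarith) (neg_nonpos.2 ha)

theorem heatKernel_nonneg (d : ℕ) {t : ℝ} (ht : 0 ≤ t) (x : EuclideanSpace ℝ (Fin d)) :
    0 ≤ heatKernel d t x := by
  unfold heatKernel; positivity

theorem heatKernel_le (d : ℕ) {t : ℝ} (ht : 0 ≤ t) (x : EuclideanSpace ℝ (Fin d)) :
    heatKernel d t x ≤ (2 * Real.pi * t) ^ (-(d : ℝ) / 2) := by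
  refine mul_le_of_le_one_right (by positivity) (Real.exp_le_one_iff.2 ?_)
  exact div_nonpos_of_nonpos_of_nonneg (neg_nonpos.2 (by positivity)) (by positivity)

@[fun_prop]
theorem continuous_heatKernel (d : ℕ) (t : ℝ) : Continuous (heatKernel d t) := by
  unfold heatKernel; fun_prop

theorem integral_heatKernel (d : ℕ) {t : ℝ} (ht : 0 < t) :
    ∫ x, heatKernel d t x = 1 := by
  have hgauss := GaussianFourier.integral_rexp_neg_mul_sq_norm
    (V := EuclideanSpace ℝ (Fin d)) (b := 1 / (2 * t)) (by positivity)
  have hexp : ∀ x : EuclideanSpace ℝ (Fin d), -‖x‖ ^ 2 / (2 * t) = -(1 / (2 * t)) * ‖x‖ ^ 2 :=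
    fun x => by ring
  rw [finrank_euclideanSpace_fin, show Real.pi / (1 / (2 * t)) = 2 * Real.pi * t by field_simp]
    at hgauss
  simp_rw [heatKernel, integral_const_mul, hexp, hgauss]
  rw [neg_div, Real.rpow_neg (by positivity)]
  exact inv_mul_cancel₀ (by positivity)

theorem lintegral_heatKernel_sub (d : ℕ) {t : ℝ} (ht : 0 < t) (c : EuclideanSpace ℝ (Fin d)) :
    ∫⁻ x, ENNReal.ofReal (heatKernel d t (x - c)) = 1 := by
  rw [lintegral_sub_right_eq_self (fun x => ENNReal.ofReal (heatKernel d t x)) c,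
    ← ofReal_integral_eq_lintegral_ofReal, integral_heatKernel d ht, ENNReal.ofReal_one]
  · exact .of_integral_ne_zero (by simp [integral_heatKernel d ht])
  · exact ae_of_all _ (heatKernel_nonneg d ht.le)

theorem ofReal_heatKernel_mul_norm_rpow_le (d : ℕ) {t : ℝ} (ht : 0 < t) {e : ℝ} (he : e ≤ 0)
    (b c x : EuclideanSpace ℝ (Fin d)) :
    ENNReal.ofReal (heatKernel d t (x - c) * ‖x - b‖ ^ e)
      ≤ ENNReal.ofReal ((2 * Real.pi * t) ^ (-(d : ℝ) / 2))
          * (ball 0 (Real.sqrt t)).indicator (fun y => ENNReal.ofReal (‖y‖ ^ e)) (x - b)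
        + ENNReal.ofReal (t ^ (e / 2)) * ENNReal.ofReal (heatKernel d t (x - c)) := by
  rw [ENNReal.ofReal_mul (heatKernel_nonneg d ht.le _)]
  by_cases hx : x - b ∈ ball 0 (Real.sqrt t)
  · rw [Set.indicator_of_mem hx]
    exact le_add_right (by gcongr; exact heatKernel_le d ht.le _)
  · rw [mem_ball_zero_iff, not_lt] at hx
    rw [mul_comm, ← Real.sqrt_rpow_eq_rpow_div_two ht.le]
    exact le_add_left (mul_le_mul_left (ENNReal.ofReal_le_ofReal
      (Real.rpow_le_rpow_of_nonpos (Real.sqrt_pos.2 ht) hx he)) _)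

theorem lintegral_heatKernel_mul_norm_rpow_le (d : ℕ) {t : ℝ} (ht : 0 < t) {e : ℝ} (he : e ≤ 0)
    (b c : EuclideanSpace ℝ (Fin d)) :
    ∫⁻ x, ENNReal.ofReal (heatKernel d t (x - c) * ‖x - b‖ ^ e)
      ≤ (ENNReal.ofReal ((2 * Real.pi) ^ (-(d : ℝ) / 2))
          * (∫⁻ x in ball (0 : EuclideanSpace ℝ (Fin d)) 1, ENNReal.ofReal (‖x‖ ^ e)) + 1)
        * ENNReal.ofReal (t ^ (e / 2)) := by
  have hconst : (2 * Real.pi * t) ^ (-(d : ℝ) / 2) * Real.sqrt t ^ ((d : ℝ) + e)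
      = (2 * Real.pi) ^ (-(d : ℝ) / 2) * t ^ (e / 2) := by
    rw [Real.sqrt_rpow_eq_rpow_div_two ht.le, Real.mul_rpow (by positivity) ht.le, mul_assoc,
      ← Real.rpow_add ht]
    ring_nf
  refine (lintegral_mono (ofReal_heatKernel_mul_norm_rpow_le d ht he b c)).trans_eq ?_
  rw [lintegral_add_right _ (by fun_prop), lintegral_const_mul' _ _ ENNReal.ofReal_ne_top,
    lintegral_const_mul' _ _ ENNReal.ofReal_ne_top, lintegral_heatKernel_sub d ht, mul_one,
    lintegral_sub_right_eq_self, lintegral_indicator measurableSet_ball,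
    lintegral_ball_norm_rpow volume (Real.sqrt_pos.2 ht), finrank_euclideanSpace_fin,
    ← mul_assoc, ← ENNReal.ofReal_mul (by positivity), hconst, ENNReal.ofReal_mul (by positivity)]
  ring

theorem Jf_le_of_forall_lintegral_le (d : ℕ) (f : EuclideanSpace ℝ (Fin d) → ℝ) {u : ℝ} (hu : 0 < u)
    (v : ℝ) (y z : EuclideanSpace ℝ (Fin d)) {A : ENNReal}
    (hA : ∀ x, ∫⁻ x', ENNReal.ofReal (heatKernel d v (x' - z) * f (x - x')) ≤ A) :
    Jf d f u v y z ≤ A :=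
  calc Jf d f u v y z
      = ∫⁻ x, ENNReal.ofReal (heatKernel d u (x - y))
          * ∫⁻ x', ENNReal.ofReal (heatKernel d v (x' - z) * f (x - x')) := by
        refine lintegral_congr fun x => ?_
        rw [← lintegral_const_mul' _ _ ENNReal.ofReal_ne_top]
        simp_rw [mul_assoc, ENNReal.ofReal_mul (heatKernel_nonneg d hu.le _)]
    _ ≤ ∫⁻ x, ENNReal.ofReal (heatKernel d u (x - y)) * A := by gcongr with x; exact hA x
    _ = A := by
        rw [lintegral_mul_const _ (by fun_prop), lintegral_heatKernel_sub d hu, one_mul]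

theorem Jf_comm (d : ℕ) {f : EuclideanSpace ℝ (Fin d) → ℝ} (hf : Measurable f)
    (hf_neg : ∀ x, f (-x) = f x) (u v : ℝ) (y z : EuclideanSpace ℝ (Fin d)) :
    Jf d f u v y z = Jf d f v u z y := by
  unfold Jf
  rw [lintegral_lintegral_swap (by fun_prop)]
  refine lintegral_congr fun x' => lintegral_congr fun x => ?_
  rw [mul_comm (heatKernel d u _), ← hf_neg, neg_sub]

noncomputable def rieszConst (d : ℕ) (α : ℝ) : ℝ :=
  Real.Gamma (((d : ℝ) - α) / 2) * 2 ^ (-α) * Real.pi ^ (-(d : ℝ) / 2) / Real.Gamma (α / 2)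

theorem rieszKernel_eq (d : ℕ) (α : ℝ) (x : EuclideanSpace ℝ (Fin d)) :
    rieszKernel d α x = rieszConst d α * ‖x‖ ^ (α - d) := rfl

theorem rieszConst_pos {d : ℕ} {α : ℝ} (hα0 : 0 < α) (hαd : α < d) : 0 < rieszConst d α := by
  have := Real.Gamma_pos_of_pos (s := ((d : ℝ) - α) / 2) (by linarith)
  have := Real.Gamma_pos_of_pos (s := α / 2) (by linarith)
  unfold rieszConst
  positivity

theorem rieszKernel_neg (d : ℕ) (α : ℝ) (x : EuclideanSpace ℝ (Fin d)) :
    rieszKernel d α (-x) = rieszKernel d α x := by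
  simp only [rieszKernel_eq, norm_neg]

@[fun_prop]
theorem measurable_rieszKernel (d : ℕ) (α : ℝ) : Measurable (rieszKernel d α) :=
  (measurable_norm.pow_const _).const_mul _

theorem exists_lintegral_heatKernel_mul_rieszKernel_le {d : ℕ} (hd : 1 ≤ d) {α : ℝ} (hα0 : 0 < α)
    (hαd : α < d) :
    ∃ C : ℝ, 0 < C ∧ ∀ t : ℝ, 0 < t → ∀ x z : EuclideanSpace ℝ (Fin d),
      ∫⁻ x', ENNReal.ofReal (heatKernel d t (x' - z) * rieszKernel d α (x - x'))
        ≤ ENNReal.ofReal (C * t ^ (-(((d : ℝ) - α) / 2))) := by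
  set B := ∫⁻ x in ball (0 : EuclideanSpace ℝ (Fin d)) 1, ENNReal.ofReal (‖x‖ ^ (α - d))
  have hB : B ≠ ∞ := (lintegral_ball_norm_rpow_lt_top volume (by simpa using hd)
    (by simpa using hα0)).ne
  have hγ := rieszConst_pos hα0 hαd
  refine ⟨rieszConst d α * ((2 * Real.pi) ^ (-(d : ℝ) / 2) * B.toReal + 1), by positivity,
    fun t ht x z => ?_⟩
  have hpoint : ∀ x', ENNReal.ofReal (heatKernel d t (x' - z) * rieszKernel d α (x - x'))
      = ENNReal.ofReal (rieszConst d α)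
          * ENNReal.ofReal (heatKernel d t (x' - z) * ‖x' - x‖ ^ (α - d)) := by
    intro x'
    rw [← ENNReal.ofReal_mul hγ.le, rieszKernel_eq, norm_sub_rev, mul_left_comm]
  calc ∫⁻ x', ENNReal.ofReal (heatKernel d t (x' - z) * rieszKernel d α (x - x'))
      = ENNReal.ofReal (rieszConst d α)
          * ∫⁻ x', ENNReal.ofReal (heatKernel d t (x' - z) * ‖x' - x‖ ^ (α - d)) := by
        simp_rw [hpoint]
        exact lintegral_const_mul' _ _ ENNReal.ofReal_ne_top
    _ ≤ ENNReal.ofReal (rieszConst d α)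
          * ((ENNReal.ofReal ((2 * Real.pi) ^ (-(d : ℝ) / 2)) * B + 1)
            * ENNReal.ofReal (t ^ ((α - d) / 2))) := by
        gcongr
        exact lintegral_heatKernel_mul_norm_rpow_le d ht (by linarith) x z
    _ = _ := by
        rw [show -(((d : ℝ) - α) / 2) = (α - d) / 2 by ring, ENNReal.ofReal_mul (by positivity),
          ENNReal.ofReal_mul (by positivity),
          ENNReal.ofReal_add (by positivity) zero_le_one, ENNReal.ofReal_mul (by positivity),
          ENNReal.ofReal_toReal hB, ENNReal.ofReal_one]
        ring

/-- For the Riesz kernel of order `α` (`0 < α < d`), there is a constant `D_{α,d} > 0` such that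
`J_f(u,v,y,z) ≤ D_{α,d} (u+v)^{-(d-α)/2}` for all `u, v > 0`, `y, z ∈ ℝ^d`. -/
theorem riesz_J_bound (d : ℕ) (hd : 1 ≤ d) (α : ℝ) (hα0 : 0 < α) (hαd : α < d) :
    ∃ D : ℝ, 0 < D ∧ ∀ u v : ℝ, 0 < u → 0 < v → ∀ y z : EuclideanSpace ℝ (Fin d),
      Jf d (rieszKernel d α) u v y z
        ≤ ENNReal.ofReal (D * (u + v) ^ (-((d : ℝ) - α) / 2)) := by
  obtain ⟨C, hC, hbound⟩ := exists_lintegral_heatKernel_mul_rieszKernel_le hd hα0 hαd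
  refine ⟨C * 2 ^ (((d : ℝ) - α) / 2), by positivity, fun u v hu hv y z => ?_⟩
  wlog huv : u ≤ v generalizing u v y z
  · rw [Jf_comm d (measurable_rieszKernel d α) (rieszKernel_neg d α), add_comm]
    exact this v u hv hu z y (le_of_not_ge huv)
  refine (Jf_le_of_forall_lintegral_le d _ hu v y z fun x => hbound v hv x z).trans
    (ENNReal.ofReal_le_ofReal ?_)
  rw [neg_div, mul_assoc]
  gcongr
  exact Real.rpow_neg_le_two_rpow_mul_add_rpow_neg hu huv (by linarith)
end

section
/- Let d ≥ 1 be an integer and 0 < α < d. Then for every x > 0: ∫₀^∞ w^{α/2−1} e^{−w} (w+x)^{−d/2} dw ≤ K_{α,d} · x^{−(d−α)/2}, where K_{α,d} = 2d/(α(d−α)). -/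
/-!
Drop `e^{-w} ≤ 1` and split the integral at `w = x`. On `(0, x]` bound `(w + x)^{-d/2}` by
`x^{-d/2}`, on `(x, ∞)` by `w^{-d/2}`; the two power integrals give
`x^{-(d-α)/2} (2/α + 2/(d-α)) = K_{α,d} x^{-(d-α)/2}`. Convergence needs `α > 0` at `0` and
`α < d` at `∞`.
-/

open MeasureTheory Set

namespace Real

variable {a b x : ℝ}

theorem setLIntegral_Ioc_rpow_sub_one (ha : 0 < a) (hx : 0 ≤ x) :
    ∫⁻ w in Ioc 0 x, ENNReal.ofReal (w ^ (a - 1)) = ENNReal.ofReal (x ^ a / a) := by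
  have hint : IntegrableOn (fun w : ℝ ↦ w ^ (a - 1)) (Ioc 0 x) :=
    (intervalIntegrable_iff_integrableOn_Ioc_of_le hx).mp
      (intervalIntegral.intervalIntegrable_rpow' (by linarith))
  rw [← ofReal_integral_eq_lintegral_ofReal hint
    ((ae_restrict_iff' measurableSet_Ioc).mpr (ae_of_all _ fun w hw ↦ by have := hw.1; positivity)),
    ← intervalIntegral.integral_of_le hx, integral_rpow (Or.inl (by linarith)), sub_add_cancel,
    zero_rpow ha.ne', sub_zero]

theorem setLIntegral_Ioi_rpow_sub_one (ha : a < 0) (hx : 0 < x) :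
    ∫⁻ w in Ioi x, ENNReal.ofReal (w ^ (a - 1)) = ENNReal.ofReal (x ^ a / -a) := by
  have hlt : a - 1 < -1 := by linarith
  rw [← ofReal_integral_eq_lintegral_ofReal (integrableOn_Ioi_rpow_of_lt hlt hx)
    ((ae_restrict_iff' measurableSet_Ioi).mpr
      (ae_of_all _ fun w hw ↦ by have : 0 < w := hx.trans hw; positivity)),
    integral_Ioi_rpow_of_lt hlt hx, sub_add_cancel, neg_div, div_neg]

theorem setLIntegral_Ioc_rpow_mul_add_rpow_neg_le (ha : 0 < a) (hb : 0 ≤ b) (hx : 0 < x) :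
    ∫⁻ w in Ioc 0 x, ENNReal.ofReal (w ^ (a - 1) * (w + x) ^ (-b))
      ≤ ENNReal.ofReal (x ^ (a - b) / a) := by
  calc ∫⁻ w in Ioc 0 x, ENNReal.ofReal (w ^ (a - 1) * (w + x) ^ (-b))
      ≤ ∫⁻ w in Ioc 0 x, ENNReal.ofReal (w ^ (a - 1)) * ENNReal.ofReal (x ^ (-b)) := by
        refine setLIntegral_mono' measurableSet_Ioc fun w ⟨hw, _⟩ ↦ ?_
        rw [← ENNReal.ofReal_mul (by positivity)]
        exact ENNReal.ofReal_le_ofReal <| mul_le_mul_of_nonneg_left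
          (rpow_le_rpow_of_nonpos hx (by linarith) (by linarith)) (by positivity)
    _ = ENNReal.ofReal (x ^ (a - b) / a) := by
        rw [lintegral_mul_const' _ _ ENNReal.ofReal_ne_top, setLIntegral_Ioc_rpow_sub_one ha hx.le,
          ← ENNReal.ofReal_mul (by positivity), div_mul_eq_mul_div, ← rpow_add hx, ← sub_eq_add_neg]

theorem setLIntegral_Ioi_rpow_mul_add_rpow_neg_le (hab : a < b) (hb : 0 ≤ b) (hx : 0 < x) :
    ∫⁻ w in Ioi x, ENNReal.ofReal (w ^ (a - 1) * (w + x) ^ (-b))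
      ≤ ENNReal.ofReal (x ^ (a - b) / (b - a)) := by
  calc ∫⁻ w in Ioi x, ENNReal.ofReal (w ^ (a - 1) * (w + x) ^ (-b))
      ≤ ∫⁻ w in Ioi x, ENNReal.ofReal (w ^ (a - b - 1)) := by
        refine setLIntegral_mono' measurableSet_Ioi fun w hw ↦ ?_
        have hw0 : 0 < w := hx.trans hw
        rw [show a - b - 1 = (a - 1) + -b by ring, rpow_add hw0]
        exact ENNReal.ofReal_le_ofReal <| mul_le_mul_of_nonneg_left
          (rpow_le_rpow_of_nonpos hw0 (by linarith) (by linarith)) (by positivity)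
    _ = ENNReal.ofReal (x ^ (a - b) / (b - a)) := by
        rw [setLIntegral_Ioi_rpow_sub_one (by linarith) hx, neg_sub]

theorem setLIntegral_Ioi_zero_rpow_mul_add_rpow_neg_le (ha : 0 < a) (hab : a < b) (hx : 0 < x) :
    ∫⁻ w in Ioi 0, ENNReal.ofReal (w ^ (a - 1) * (w + x) ^ (-b))
      ≤ ENNReal.ofReal (b / (a * (b - a)) * x ^ (a - b)) := by
  rw [← Ioc_union_Ioi_eq_Ioi hx.le, lintegral_union measurableSet_Ioi Ioc_disjoint_Ioi_same]
  calc _ ≤ ENNReal.ofReal (x ^ (a - b) / a) + ENNReal.ofReal (x ^ (a - b) / (b - a)) :=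
        add_le_add (setLIntegral_Ioc_rpow_mul_add_rpow_neg_le ha (by linarith) hx)
          (setLIntegral_Ioi_rpow_mul_add_rpow_neg_le hab (by linarith) hx)
    _ = ENNReal.ofReal (b / (a * (b - a)) * x ^ (a - b)) := by
        have : b - a ≠ 0 := by linarith
        rw [← ENNReal.ofReal_add (div_nonneg (by positivity) ha.le)
          (div_nonneg (by positivity) (by linarith))]
        congr 1
        field_simp
        ring

end Real

theorem integral_bound_I_alpha_d_general (d : ℕ) (α : ℝ) (hα0 : 0 < α) (hαd : α < d)
    (x : ℝ) (hx : 0 < x) :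
    ∫⁻ w in Set.Ioi (0 : ℝ),
        ENNReal.ofReal (w ^ (α / 2 - 1) * Real.exp (-w) * (w + x) ^ (-(d : ℝ) / 2))
      ≤ ENNReal.ofReal ((2 * d / (α * ((d : ℝ) - α))) * x ^ (-((d : ℝ) - α) / 2)) := by
  calc _ ≤ ∫⁻ w in Ioi 0, ENNReal.ofReal (w ^ (α / 2 - 1) * (w + x) ^ (-((d : ℝ) / 2))) := by
        refine setLIntegral_mono' measurableSet_Ioi fun w hw ↦ ?_
        have hw0 : (0 : ℝ) < w := hw
        rw [neg_div]
        gcongr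
        exact mul_le_of_le_one_right (by positivity) (Real.exp_le_one_iff.mpr (by linarith))
    _ ≤ _ := Real.setLIntegral_Ioi_zero_rpow_mul_add_rpow_neg_le (by positivity) (by linarith) hx
    _ = _ := by
        have : (d : ℝ) - α ≠ 0 := by linarith
        rw [show α / 2 - (d : ℝ) / 2 = -((d : ℝ) - α) / 2 by ring]
        congr 2
        field_simp

/-- For `0 < α < d` and `x > 0`:
`∫₀^∞ w^{α/2-1} e^{-w} (w+x)^{-d/2} dw ≤ K_{α,d} x^{-(d-α)/2}` with
`K_{α,d} = 2d/(α(d-α))`. -/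
theorem integral_bound_I_alpha_d (d : ℕ) (hd : 1 ≤ d) (α : ℝ) (hα0 : 0 < α) (hαd : α < d)
    (x : ℝ) (hx : 0 < x) :
    ∫⁻ w in Set.Ioi (0 : ℝ),
        ENNReal.ofReal (w ^ (α / 2 - 1) * Real.exp (-w) * (w + x) ^ (-(d : ℝ) / 2))
      ≤ ENNReal.ofReal ((2 * d / (α * ((d : ℝ) - α))) * x ^ (-((d : ℝ) - α) / 2)) :=
  integral_bound_I_alpha_d_general d α hα0 hαd x hx
end

section
/- Let H ∈ (1/2, 1), set α_H = H(2H−1), and suppose β > 0 is a constant such that for every nonnegative φ ∈ L^{1/H}(ℝ₊): α_H ∫₀^∞∫₀^∞ φ(s) φ(t) |t−s|^{2H−2} ds dt ≤ β² (∫₀^∞ φ(t)^{1/H} dt)^{2H}. Then for every integer n ≥ 1 and every nonnegative φ ∈ L^{1/H}(ℝ₊^n): α_H^n ∫_{ℝ₊^{2n}} φ(𝐬) φ(𝐭) ∏_{j=1}^n |t_j−s_j|^{2H−2} d𝐬 d𝐭 ≤ β^{2n} (∫_{ℝ₊^n} φ(𝐭)^{1/H} d𝐭)^{2H}. -/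
/-!
For `s ≠ t`, `|t - s| ^ (2H - 2)` is a constant multiple of
`∫ (s - u)₊ ^ (H - 3/2) (t - u)₊ ^ (H - 3/2) du`, so the kernel is positive definite and its
bilinear form `B` satisfies the Cauchy–Schwarz inequality. Splitting off the first coordinate,
`B_{n+1}(φ, φ) = ∫∫ K_n(y, z) B_1(φ(·, y), φ(·, z)) dy dz`, and Cauchy–Schwarz together with the
one-dimensional hypothesis bound `α_H B_1(φ(·, y), φ(·, z))` by `β² N(y) N(z)`, where
`N(y) = ‖φ(·, y)‖_{1/H}`. The inductive hypothesis applied to `N`, and Fubini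
(`‖N‖_{1/H} = ‖φ‖_{1/H}`), complete the induction on `n`.

All of this is done for `ℝ≥0∞`-valued functions, where no integrability side conditions arise.
The one-dimensional hypothesis extends to them: if `∫ f ^ (1/H) < ∞`, then `f` is a.e. finite.
-/

open MeasureTheory Set Function
open scoped ENNReal

noncomputable section

variable {α β : Type*}

def tensorKernel (k : α → α → ℝ≥0∞) (n : ℕ) (s t : Fin n → α) : ℝ≥0∞ := ∏ j, k (s j) (t j)

theorem tensorKernel_cons (k : α → α → ℝ≥0∞) (n : ℕ) (u v : α) (y z : Fin n → α) :
    tensorKernel k (n + 1) (Fin.cons u y) (Fin.cons v z) = k u v * tensorKernel k n y z := by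
  simp [tensorKernel, Fin.prod_univ_succ]

variable [MeasurableSpace α] [MeasurableSpace β]

def kernelForm (μ : Measure α) (k : α → α → ℝ≥0∞) (f g : α → ℝ≥0∞) : ℝ≥0∞ :=
  ∫⁻ s, ∫⁻ t, f s * g t * k s t ∂μ ∂μ

theorem kernelForm_congr_ae {μ : Measure α} (k : α → α → ℝ≥0∞) {f f' g g' : α → ℝ≥0∞}
    (hf : f =ᵐ[μ] f') (hg : g =ᵐ[μ] g') : kernelForm μ k f g = kernelForm μ k f' g' := by
  refine lintegral_congr_ae ?_
  filter_upwards [hf] with s hs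
  refine lintegral_congr_ae ?_
  filter_upwards [hg] with t ht
  rw [hs, ht]

theorem sq_lintegral_mul_le (ν : Measure β) {F G : β → ℝ≥0∞} (hF : AEMeasurable F ν)
    (hG : AEMeasurable G ν) :
    (∫⁻ u, F u * G u ∂ν) ^ 2 ≤ (∫⁻ u, F u * F u ∂ν) * ∫⁻ u, G u * G u ∂ν :=
  calc (∫⁻ u, F u * G u ∂ν) ^ 2
      ≤ ((∫⁻ u, F u ^ (2 : ℝ) ∂ν) ^ (1 / 2 : ℝ) * (∫⁻ u, G u ^ (2 : ℝ) ∂ν) ^ (1 / 2 : ℝ)) ^ 2 := by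
        gcongr
        exact ENNReal.lintegral_mul_le_Lp_mul_Lq ν Real.HolderConjugate.two_two hF hG
    _ = (∫⁻ u, F u * F u ∂ν) * ∫⁻ u, G u * G u ∂ν := by
        rw [mul_pow, ← ENNReal.rpow_natCast, ← ENNReal.rpow_natCast, ← ENNReal.rpow_mul,
          ← ENNReal.rpow_mul]
        norm_num [sq]

section GramKernel

variable {μ : Measure α} {ν : Measure β} [SFinite μ] [SFinite ν] {k : α → α → ℝ≥0∞}
  {G : β → α → ℝ≥0∞} (hG : Measurable (uncurry G))
  (hk : ∀ s, ∀ᵐ t ∂μ, k s t = ∫⁻ u, G u s * G u t ∂ν)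
include hG hk

theorem kernelForm_eq_lintegral_mul {f g : α → ℝ≥0∞} (hf : Measurable f) (hg : Measurable g) :
    kernelForm μ k f g = ∫⁻ u, (∫⁻ s, f s * G u s ∂μ) * (∫⁻ t, g t * G u t ∂μ) ∂ν := by
  have hG' : Measurable fun p : β × α => G p.1 p.2 := hG
  calc kernelForm μ k f g
      = ∫⁻ s, ∫⁻ t, ∫⁻ u, f s * G u s * (g t * G u t) ∂ν ∂μ ∂μ := by
        refine lintegral_congr fun s => lintegral_congr_ae ?_
        filter_upwards [hk s] with t ht
        rw [ht, ← lintegral_const_mul _ (by fun_prop)]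
        exact lintegral_congr fun u => by ring
    _ = ∫⁻ s, ∫⁻ u, ∫⁻ t, f s * G u s * (g t * G u t) ∂μ ∂ν ∂μ :=
        lintegral_congr fun s => lintegral_lintegral_swap (by fun_prop)
    _ = ∫⁻ u, ∫⁻ s, ∫⁻ t, f s * G u s * (g t * G u t) ∂μ ∂μ ∂ν :=
        lintegral_lintegral_swap (by fun_prop)
    _ = ∫⁻ u, (∫⁻ s, f s * G u s ∂μ) * (∫⁻ t, g t * G u t ∂μ) ∂ν := by
        refine lintegral_congr fun u => ?_
        rw [← lintegral_mul_const _ (by fun_prop)]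
        exact lintegral_congr fun s => lintegral_const_mul _ (by fun_prop)

theorem kernelForm_sq_le {f g : α → ℝ≥0∞} (hf : Measurable f) (hg : Measurable g) :
    kernelForm μ k f g ^ 2 ≤ kernelForm μ k f f * kernelForm μ k g g := by
  rw [kernelForm_eq_lintegral_mul hG hk hf hg, kernelForm_eq_lintegral_mul hG hk hf hf,
    kernelForm_eq_lintegral_mul hG hk hg hg]
  exact sq_lintegral_mul_le ν (by fun_prop) (by fun_prop)

end GramKernel

@[fun_prop]
theorem Measurable.finCons {γ : Type*} [MeasurableSpace γ] {n : ℕ} {f : γ → α}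
    {g : γ → Fin n → α} (hf : Measurable f) (hg : Measurable g) :
    Measurable fun x => (Fin.cons (f x) (g x) : Fin (n + 1) → α) := by
  refine measurable_pi_iff.2 fun i => Fin.cases ?_ (fun j => ?_) i
  · simpa only [Fin.cons_zero] using hf
  · simp only [Fin.cons_succ]
    fun_prop

theorem measurable_tensorKernel {k : α → α → ℝ≥0∞} (hk : Measurable (uncurry k)) (n : ℕ) :
    Measurable fun p : (Fin n → α) × (Fin n → α) => tensorKernel k n p.1 p.2 :=
  Finset.measurable_prod _ fun j _ =>
    hk.comp (f := fun p : (Fin n → α) × (Fin n → α) => (p.1 j, p.2 j)) (by fun_prop)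

theorem lintegral_pi_fin_succ (μ : Measure α) [SigmaFinite μ] {n : ℕ}
    {F : (Fin (n + 1) → α) → ℝ≥0∞} (hF : Measurable F) :
    ∫⁻ x, F x ∂Measure.pi (fun _ => μ)
      = ∫⁻ u, ∫⁻ y, F (Fin.cons u y) ∂Measure.pi (fun _ => μ) ∂μ := by
  have e := (measurePreserving_piFinSuccAbove (fun _ : Fin (n + 1) => μ) 0).symm
  rw [← e.lintegral_comp hF, lintegral_prod _ (by fun_prop)]
  simp [MeasurableEquiv.piFinSuccAbove_symm_apply, Fin.insertNthEquiv]

section Tensorization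

variable (μ : Measure α) {k : α → α → ℝ≥0∞}

theorem kernelForm_pi_succ [SigmaFinite μ] (hk : Measurable (uncurry k)) {n : ℕ}
    {f g : (Fin (n + 1) → α) → ℝ≥0∞} (hf : Measurable f) (hg : Measurable g) :
    kernelForm (Measure.pi fun _ => μ) (tensorKernel k (n + 1)) f g
      = ∫⁻ y, ∫⁻ z, tensorKernel k n y z *
          kernelForm μ k (fun u => f (Fin.cons u y)) (fun v => g (Fin.cons v z))
          ∂Measure.pi (fun _ => μ) ∂Measure.pi (fun _ => μ) := by
  have hk' : Measurable fun p : α × α => k p.1 p.2 := hk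
  have hK := measurable_tensorKernel hk n
  have hK' := measurable_tensorKernel hk (n + 1)
  calc kernelForm (Measure.pi fun _ => μ) (tensorKernel k (n + 1)) f g
      = ∫⁻ u, ∫⁻ y, ∫⁻ v, ∫⁻ z, f (Fin.cons u y) * g (Fin.cons v z) *
          (k u v * tensorKernel k n y z)
          ∂Measure.pi (fun _ => μ) ∂μ ∂Measure.pi (fun _ => μ) ∂μ := by
        rw [kernelForm, lintegral_pi_fin_succ μ (by fun_prop)]
        refine lintegral_congr fun u => lintegral_congr fun y => ?_
        rw [lintegral_pi_fin_succ μ (by fun_prop)]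
        simp only [tensorKernel_cons]
    _ = ∫⁻ u, ∫⁻ y, ∫⁻ z, ∫⁻ v, f (Fin.cons u y) * g (Fin.cons v z) *
          (k u v * tensorKernel k n y z)
          ∂μ ∂Measure.pi (fun _ => μ) ∂Measure.pi (fun _ => μ) ∂μ :=
        lintegral_congr fun u => lintegral_congr fun y => lintegral_lintegral_swap (by fun_prop)
    _ = ∫⁻ y, ∫⁻ u, ∫⁻ z, ∫⁻ v, f (Fin.cons u y) * g (Fin.cons v z) *
          (k u v * tensorKernel k n y z)
          ∂μ ∂Measure.pi (fun _ => μ) ∂μ ∂Measure.pi (fun _ => μ) :=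
        lintegral_lintegral_swap (by fun_prop)
    _ = ∫⁻ y, ∫⁻ z, ∫⁻ u, ∫⁻ v, f (Fin.cons u y) * g (Fin.cons v z) *
          (k u v * tensorKernel k n y z)
          ∂μ ∂μ ∂Measure.pi (fun _ => μ) ∂Measure.pi (fun _ => μ) :=
        lintegral_congr fun y => lintegral_lintegral_swap (by fun_prop)
    _ = _ := by
        refine lintegral_congr fun y => lintegral_congr fun z => ?_
        rw [kernelForm, ← lintegral_const_mul _ (by fun_prop)]
        refine lintegral_congr fun u => ?_
        rw [← lintegral_const_mul _ (by fun_prop)]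
        exact lintegral_congr fun v => by ring

variable {C : ℝ≥0∞} {p : ℝ}
  (hCS : ∀ f g, Measurable f → Measurable g →
    kernelForm μ k f g ^ 2 ≤ kernelForm μ k f f * kernelForm μ k g g)
  (hb : ∀ f, Measurable f → kernelForm μ k f f ≤ C * (∫⁻ x, f x ^ p ∂μ) ^ (2 / p))
include hCS hb

theorem kernelForm_le_mul_lintegral_rpow {f g : α → ℝ≥0∞} (hf : Measurable f)
    (hg : Measurable g) :
    kernelForm μ k f g
      ≤ C * ((∫⁻ x, f x ^ p ∂μ) ^ (1 / p) * (∫⁻ x, g x ^ p ∂μ) ^ (1 / p)) := by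
  have hsq : ∀ x : ℝ≥0∞, (x ^ (1 / p)) ^ 2 = x ^ (2 / p) := fun x => by
    rw [← ENNReal.rpow_natCast, ← ENNReal.rpow_mul]
    ring_nf
  rw [← ENNReal.pow_le_pow_left_iff two_ne_zero]
  calc kernelForm μ k f g ^ 2
      ≤ C * (∫⁻ x, f x ^ p ∂μ) ^ (2 / p) * (C * (∫⁻ x, g x ^ p ∂μ) ^ (2 / p)) :=
        (hCS f g hf hg).trans (mul_le_mul' (hb f hf) (hb g hg))
    _ = _ := by
        rw [mul_pow, mul_pow, hsq, hsq]
        ring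

theorem kernelForm_pi_le [SigmaFinite μ] (hk : Measurable (uncurry k)) (hp : p ≠ 0) (n : ℕ)
    {f : (Fin n → α) → ℝ≥0∞} (hf : Measurable f) :
    kernelForm (Measure.pi fun _ => μ) (tensorKernel k n) f f
      ≤ C ^ n * (∫⁻ x, f x ^ p ∂Measure.pi fun _ => μ) ^ (2 / p) := by
  induction n with
  | zero =>
    simp only [kernelForm, tensorKernel, lintegral_unique, Finset.univ_eq_empty,
      Finset.prod_empty, Measure.pi_empty_univ, pow_zero, mul_one, one_mul]
    rw [← ENNReal.rpow_mul, mul_div_cancel₀ _ hp]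
    simp [sq]
  | succ n ih =>
    have hK := measurable_tensorKernel hk n
    -- `N y ^ (1 / p)` is the `L^p(μ)` norm of the slice `f (Fin.cons · y)`.
    set N : (Fin n → α) → ℝ≥0∞ := fun y => ∫⁻ u, f (Fin.cons u y) ^ p ∂μ
    have hN : Measurable N := by fun_prop
    have hNp : ∀ y, (N y ^ (1 / p)) ^ p = N y := fun y => by
      rw [← ENNReal.rpow_mul, one_div_mul_cancel hp, ENNReal.rpow_one]
    calc kernelForm (Measure.pi fun _ => μ) (tensorKernel k (n + 1)) f f
        ≤ ∫⁻ y, ∫⁻ z, tensorKernel k n y z * (C * (N y ^ (1 / p) * N z ^ (1 / p)))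
          ∂Measure.pi (fun _ => μ) ∂Measure.pi (fun _ => μ) := by
          rw [kernelForm_pi_succ μ hk hf hf]
          gcongr with y z
          exact kernelForm_le_mul_lintegral_rpow μ hCS hb (by fun_prop) (by fun_prop)
      _ = C * kernelForm (Measure.pi fun _ => μ) (tensorKernel k n)
            (fun y => N y ^ (1 / p)) (fun y => N y ^ (1 / p)) := by
          rw [kernelForm, ← lintegral_const_mul _ (by fun_prop)]
          refine lintegral_congr fun y => ?_
          rw [← lintegral_const_mul _ (by fun_prop)]
          exact lintegral_congr fun z => by ring
      _ ≤ C * (C ^ n * (∫⁻ y, N y ∂Measure.pi fun _ => μ) ^ (2 / p)) := by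
          gcongr
          simpa only [hNp] using ih (f := fun y => N y ^ (1 / p)) (by fun_prop)
      _ = C ^ (n + 1) * (∫⁻ x, f x ^ p ∂Measure.pi fun _ => μ) ^ (2 / p) := by
          rw [lintegral_pi_fin_succ μ (by fun_prop), lintegral_lintegral_swap (by fun_prop),
            pow_succ]
          ring

end Tensorization

section RealValued

variable {μ : Measure α}

theorem ofReal_integral_rpow {φ : α → ℝ} (hφ : ∀ x, 0 ≤ φ x) {p : ℝ} (hp : 0 ≤ p)
    (hint : Integrable (fun x => φ x ^ p) μ) :
    ENNReal.ofReal (∫ x, φ x ^ p ∂μ) = ∫⁻ x, ENNReal.ofReal (φ x) ^ p ∂μ := by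
  rw [ofReal_integral_eq_lintegral_ofReal hint (.of_forall fun x => by positivity [hφ x])]
  exact lintegral_congr fun x => (ENNReal.ofReal_rpow_of_nonneg (hφ x) hp).symm

theorem ofReal_pow_mul_rpow {b x r : ℝ} (hb : 0 ≤ b) (hx : 0 ≤ x) (hr : 0 ≤ r) (m : ℕ) :
    ENNReal.ofReal (b ^ m * x ^ r) = ENNReal.ofReal b ^ m * ENNReal.ofReal x ^ r := by
  rw [ENNReal.ofReal_mul (by positivity), ENNReal.ofReal_pow hb,
    ENNReal.ofReal_rpow_of_nonneg hx hr]

theorem kernelForm_ofReal (c : ℝ) (K : α → α → ℝ) {φ : α → ℝ} (hφ : ∀ x, 0 ≤ φ x) :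
    kernelForm μ (fun s t => ENNReal.ofReal (c * K s t)) (fun x => ENNReal.ofReal (φ x))
        (fun x => ENNReal.ofReal (φ x))
      = ∫⁻ s, ∫⁻ t, ENNReal.ofReal (c * (φ s * φ t * K s t)) ∂μ ∂μ := by
  refine lintegral_congr fun s => lintegral_congr fun t => ?_
  rw [mul_left_comm, ENNReal.ofReal_mul (mul_nonneg (hφ s) (hφ t)), ENNReal.ofReal_mul (hφ s)]

theorem kernelForm_self_le_of_forall_ofReal {k : α → α → ℝ≥0∞} {C : ℝ≥0∞} (hC : C ≠ 0)
    {p : ℝ} (hp : 0 < p)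
    (h : ∀ φ : α → ℝ, Measurable φ → (∀ x, 0 ≤ φ x) → Integrable (fun x => φ x ^ p) μ →
      kernelForm μ k (fun x => ENNReal.ofReal (φ x)) (fun x => ENNReal.ofReal (φ x))
        ≤ C * ENNReal.ofReal (∫ x, φ x ^ p ∂μ) ^ (2 / p))
    {f : α → ℝ≥0∞} (hf : Measurable f) :
    kernelForm μ k f f ≤ C * (∫⁻ x, f x ^ p ∂μ) ^ (2 / p) := by
  by_cases hI : ∫⁻ x, f x ^ p ∂μ = ∞
  · rw [hI, ENNReal.top_rpow_of_pos (by positivity), ENNReal.mul_top hC]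
    exact le_top
  have hfin : ∀ᵐ x ∂μ, f x ≠ ∞ := by
    filter_upwards [ae_lt_top (by fun_prop) hI] with x hx
    exact fun hx' => by simp [hx', hp] at hx
  have hf_eq : f =ᵐ[μ] fun x => ENNReal.ofReal (f x).toReal :=
    hfin.mono fun x hx => (ENNReal.ofReal_toReal hx).symm
  have hint : Integrable (fun x => (f x).toReal ^ p) μ := by
    simp_rw [ENNReal.toReal_rpow]
    exact integrable_toReal_of_lintegral_ne_top (by fun_prop) hI
  calc kernelForm μ k f f
      = kernelForm μ k (fun x => ENNReal.ofReal (f x).toReal)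
          (fun x => ENNReal.ofReal (f x).toReal) := kernelForm_congr_ae k hf_eq hf_eq
    _ ≤ C * ENNReal.ofReal (∫ x, (f x).toReal ^ p ∂μ) ^ (2 / p) :=
        h _ (by fun_prop) (fun _ => ENNReal.toReal_nonneg) hint
    _ = C * (∫⁻ x, f x ^ p ∂μ) ^ (2 / p) := by
        rw [ofReal_integral_rpow (fun _ => ENNReal.toReal_nonneg) hp.le hint]
        congr 2
        exact lintegral_congr_ae (hf_eq.mono fun x hx => congrArg (· ^ p) hx.symm)

end RealValued

theorem ofReal_abs_mul_lintegral_comp_add_mul (F : ℝ → ℝ≥0∞) (b : ℝ) {c : ℝ} (hc : c ≠ 0) :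
    ENNReal.ofReal |c| * ∫⁻ w, F (b + c * w) = ∫⁻ u, F u := by
  rw [← (measurableEmbedding_mulLeft₀ hc).lintegral_map (fun x => F (b + x)),
    Real.map_volume_mul_left hc, lintegral_smul_measure, lintegral_add_left_eq_self, smul_eq_mul,
    ← mul_assoc, ← ENNReal.ofReal_mul (abs_nonneg c), ← abs_mul, mul_inv_cancel₀ hc, abs_one,
    ENNReal.ofReal_one, one_mul]

section RiemannLiouville

variable (γ : ℝ)

/-- `(s - u)₊ ^ γ`. For `γ ≠ 0` it vanishes when `u ≥ s`, since `0 ^ γ = 0` in Mathlib. -/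
def rlKernel (u s : ℝ) : ℝ≥0∞ := ENNReal.ofReal (max (s - u) 0 ^ γ)

def rlConst : ℝ≥0∞ := ∫⁻ w in Ioi 0, ENNReal.ofReal (w ^ γ * (1 + w) ^ γ)

theorem measurable_rlKernel : Measurable (uncurry (rlKernel γ)) :=
  ENNReal.measurable_ofReal.comp <|
    ((measurable_snd.sub measurable_fst).max measurable_const).pow_const _

variable {γ}

theorem rlKernel_of_le (hγ : γ ≠ 0) {u s : ℝ} (h : s ≤ u) : rlKernel γ u s = 0 := by
  rw [rlKernel, max_eq_right (by linarith), Real.zero_rpow hγ, ENNReal.ofReal_zero]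

theorem rlKernel_of_lt {u s : ℝ} (h : u < s) :
    rlKernel γ u s = ENNReal.ofReal ((s - u) ^ γ) := by
  rw [rlKernel, max_eq_left (by linarith)]

theorem lintegral_rlKernel_mul_rlKernel (hγ : γ ≠ 0) {s t : ℝ} (hst : s < t) :
    ∫⁻ u, rlKernel γ u s * rlKernel γ u t
      = rlConst γ * ENNReal.ofReal ((t - s) ^ (2 * γ + 1)) := by
  set a := t - s
  have ha : 0 < a := sub_pos.2 hst
  -- the substitution `u = s - a w`
  have hsub : ∀ w, rlKernel γ (s + -a * w) s * rlKernel γ (s + -a * w) t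
      = ENNReal.ofReal (a ^ (2 * γ)) *
          (Ioi 0).indicator (fun w => ENNReal.ofReal (w ^ γ * (1 + w) ^ γ)) w := by
    intro w
    rcases le_or_gt w 0 with hw | hw
    · rw [indicator_of_notMem (show w ∉ Ioi 0 from not_lt.2 hw),
        rlKernel_of_le hγ (by nlinarith), zero_mul, mul_zero]
    · rw [indicator_of_mem (show w ∈ Ioi 0 from hw), rlKernel_of_lt (by nlinarith),
        rlKernel_of_lt (by nlinarith), show s - (s + -a * w) = a * w by ring,
        show t - (s + -a * w) = a * (1 + w) by ring, ← ENNReal.ofReal_mul (by positivity),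
        ← ENNReal.ofReal_mul (by positivity), Real.mul_rpow ha.le hw.le,
        Real.mul_rpow ha.le (by linarith), two_mul, Real.rpow_add ha]
      ring_nf
  have hpow : a * a ^ (2 * γ) = a ^ (2 * γ + 1) := by
    rw [Real.rpow_add_one ha.ne', mul_comm]
  rw [← ofReal_abs_mul_lintegral_comp_add_mul _ s (neg_ne_zero.2 ha.ne'), abs_neg, abs_of_pos ha]
  simp only [hsub]
  rw [lintegral_const_mul' _ _ ENNReal.ofReal_ne_top, lintegral_indicator measurableSet_Ioi,
    ← rlConst, ← mul_assoc, ← ENNReal.ofReal_mul ha.le, hpow, mul_comm]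

theorem rlConst_lt_top (h1 : -1 < γ) (h2 : γ < -1 / 2) : rlConst γ < ⊤ := by
  have hmeas : AEStronglyMeasurable (fun w : ℝ => w ^ γ * (1 + w) ^ γ) :=
    (by fun_prop : Measurable fun w : ℝ => w ^ γ * (1 + w) ^ γ).aestronglyMeasurable
  have hnear : IntegrableOn (fun w : ℝ => w ^ γ * (1 + w) ^ γ) (Ioc 0 1) := by
    refine (intervalIntegral.intervalIntegrable_rpow' h1 (a := 0) (b := 1)).1.mono'
      hmeas.restrict ?_
    filter_upwards [ae_restrict_mem measurableSet_Ioc] with w hw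
    have h1w : (1 + w) ^ γ ≤ 1 :=
      Real.rpow_le_one_of_one_le_of_nonpos (by linarith [hw.1]) (by linarith)
    rw [Real.norm_of_nonneg (by positivity [hw.1.le])]
    exact mul_le_of_le_one_right (Real.rpow_nonneg hw.1.le γ) h1w
  have hfar : IntegrableOn (fun w : ℝ => w ^ γ * (1 + w) ^ γ) (Ioi 1) := by
    refine (integrableOn_Ioi_rpow_of_lt (by linarith : γ + γ < -1) zero_lt_one).mono'
      hmeas.restrict ?_
    filter_upwards [ae_restrict_mem measurableSet_Ioi] with w hw
    have hw0 : (0 : ℝ) < w := zero_lt_one.trans hw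
    rw [Real.norm_of_nonneg (by positivity), Real.rpow_add hw0]
    exact mul_le_mul_of_nonneg_left (Real.rpow_le_rpow_of_nonpos hw0 (by linarith) (by linarith))
      (Real.rpow_nonneg hw0.le γ)
  have := (hnear.union hfar).lintegral_lt_top
  rwa [Ioc_union_Ioi_eq_Ioi zero_le_one] at this

theorem rlConst_ne_zero : rlConst γ ≠ 0 := by
  refine (setLIntegral_pos_iff (by fun_prop)).2 ?_ |>.ne'
  have : Ioi (0 : ℝ) ⊆ support fun w => ENNReal.ofReal (w ^ γ * (1 + w) ^ γ) :=
    fun w (hw : 0 < w) => by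
      simp only [mem_support, ne_eq, ENNReal.ofReal_eq_zero, not_le]
      positivity
  rw [inter_eq_right.2 this, Real.volume_Ioi]
  exact ENNReal.zero_lt_top

end RiemannLiouville

section Fractional

variable {H : ℝ}

def fracKernel (H s t : ℝ) : ℝ≥0∞ := ENNReal.ofReal (H * (2 * H - 1) * |t - s| ^ (2 * H - 2))

theorem fracKernel_comm (H s t : ℝ) : fracKernel H s t = fracKernel H t s := by
  rw [fracKernel, fracKernel, abs_sub_comm]

/-- On the diagonal the left side is `0` (as `0 ^ (2H - 2) = 0`) but the right side is `∞`. -/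
theorem fracKernel_eq_lintegral (hH : 1 / 2 < H) (hH1 : H < 1) {s t : ℝ} (hst : s ≠ t) :
    fracKernel H s t = ∫⁻ u, rlKernel (H - 3 / 2) u s * rlKernel (H - 3 / 2) u t
      ∂((ENNReal.ofReal (H * (2 * H - 1)) / rlConst (H - 3 / 2)) • volume) := by
  wlog h : s < t generalizing s t
  · rw [fracKernel_comm, this hst.symm (lt_of_le_of_ne (not_lt.1 h) hst.symm)]
    simp_rw [mul_comm]
  rw [lintegral_smul_measure, lintegral_rlKernel_mul_rlKernel (by linarith) h, smul_eq_mul,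
    ← mul_assoc, ENNReal.div_mul_cancel rlConst_ne_zero
      (rlConst_lt_top (by linarith) (by linarith)).ne,
    fracKernel, ENNReal.ofReal_mul (by nlinarith), abs_of_pos (sub_pos.2 h),
    show 2 * (H - 3 / 2) + 1 = 2 * H - 2 by ring]

theorem measurable_fracKernel (H : ℝ) : Measurable (uncurry (fracKernel H)) :=
  ENNReal.measurable_ofReal.comp <| measurable_const.mul <|
    (measurable_snd.sub measurable_fst).abs.pow_const _

theorem kernelForm_fracKernel_sq_le (μ : Measure ℝ) [SFinite μ] [NullSingletonClass μ]
    (hH : 1 / 2 < H) (hH1 : H < 1) {f g : ℝ → ℝ≥0∞} (hf : Measurable f) (hg : Measurable g) :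
    kernelForm μ (fracKernel H) f g ^ 2
      ≤ kernelForm μ (fracKernel H) f f * kernelForm μ (fracKernel H) g g :=
  kernelForm_sq_le (measurable_rlKernel _)
    (fun s => (μ.ae_ne s).mono fun _ ht => fracKernel_eq_lintegral hH hH1 ht.symm) hf hg

theorem tensorKernel_fracKernel (hH : 1 / 2 < H) (n : ℕ) (s t : Fin n → ℝ) :
    tensorKernel (fracKernel H) n s t
      = ENNReal.ofReal ((H * (2 * H - 1)) ^ n * ∏ j, |t j - s j| ^ (2 * H - 2)) := by
  have hα : 0 ≤ H * (2 * H - 1) := by nlinarith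
  rw [tensorKernel, ← Fin.prod_const, ← Finset.prod_mul_distrib, ENNReal.ofReal_prod_of_nonneg]
  · rfl
  · intro j _
    positivity

end Fractional

end

/-- If `β > 0` satisfies
`α_H ∫₀^∞∫₀^∞ φ(s)φ(t)|t-s|^{2H-2} ds dt ≤ β² (∫₀^∞ φ(t)^{1/H} dt)^{2H}`
for every nonnegative `φ ∈ L^{1/H}(ℝ₊)` (where `α_H = H(2H-1)`, `1/2 < H < 1`), then for
every `n ≥ 1` and every nonnegative `φ ∈ L^{1/H}(ℝ₊^n)`:
`α_H^n ∫ φ(𝐬)φ(𝐭) ∏_j |t_j-s_j|^{2H-2} d𝐬 d𝐭 ≤ β^{2n} (∫ φ^{1/H})^{2H}`. -/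
theorem tensorization_fractional_inequality (H β : ℝ) (hH : 1 / 2 < H) (hH1 : H < 1)
    (hβ : 0 < β)
    (hyp : ∀ φ : ℝ → ℝ, Measurable φ → (∀ a, 0 ≤ φ a) →
      Integrable (fun a => φ a ^ (1 / H)) (volume.restrict (Set.Ioi (0 : ℝ))) →
      (∫⁻ s in Set.Ioi (0 : ℝ), ∫⁻ t in Set.Ioi (0 : ℝ),
          ENNReal.ofReal (H * (2 * H - 1) * (φ s * φ t * |t - s| ^ (2 * H - 2))))
        ≤ ENNReal.ofReal (β ^ 2 * (∫ a in Set.Ioi (0 : ℝ), φ a ^ (1 / H)) ^ (2 * H))) :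
    ∀ (n : ℕ), 1 ≤ n → ∀ φ : (Fin n → ℝ) → ℝ, Measurable φ → (∀ a, 0 ≤ φ a) →
      Integrable (fun a => φ a ^ (1 / H))
        (volume.restrict (Set.univ.pi fun _ : Fin n => Set.Ioi (0 : ℝ))) →
      (∫⁻ s in Set.univ.pi (fun _ : Fin n => Set.Ioi (0 : ℝ)),
          ∫⁻ t in Set.univ.pi (fun _ : Fin n => Set.Ioi (0 : ℝ)),
          ENNReal.ofReal ((H * (2 * H - 1)) ^ n *
            (φ s * φ t * ∏ j : Fin n, |t j - s j| ^ (2 * H - 2))))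
        ≤ ENNReal.ofReal (β ^ (2 * n) *
            (∫ a in Set.univ.pi (fun _ : Fin n => Set.Ioi (0 : ℝ)), φ a ^ (1 / H)) ^ (2 * H)) := by
  intro n _ φ hφ hφ0 hint
  have hp : 0 < 1 / H := one_div_pos.2 (by linarith)
  have hexp : 2 / (1 / H) = 2 * H := by field_simp
  have h1 : ∀ f, Measurable f → kernelForm (volume.restrict (Ioi 0)) (fracKernel H) f f
      ≤ ENNReal.ofReal β ^ 2 * (∫⁻ x in Ioi 0, f x ^ (1 / H)) ^ (2 / (1 / H)) :=
    fun f hf => kernelForm_self_le_of_forall_ofReal (by positivity) hp (fun ψ hψ hψ0 hψint => by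
      rw [hexp, ← ofReal_pow_mul_rpow hβ.le (integral_nonneg fun x => by positivity [hψ0 x])
        (by linarith)]
      exact (kernelForm_ofReal _ _ hψ0).trans_le (hyp ψ hψ hψ0 hψint)) hf
  have key := kernelForm_pi_le (volume.restrict (Ioi (0 : ℝ)))
    (fun f g hf hg => kernelForm_fracKernel_sq_le _ hH hH1 hf hg) h1 (measurable_fracKernel H)
    hp.ne' n (f := fun x => ENNReal.ofReal (φ x)) (by fun_prop)
  rw [← Measure.restrict_pi_pi, ← volume_pi, funext₂ (tensorKernel_fracKernel hH n),
    kernelForm_ofReal _ _ hφ0, hexp, ← pow_mul, ← ofReal_integral_rpow hφ0 hp.le hint,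
    ← ofReal_pow_mul_rpow hβ.le (integral_nonneg fun x => by positivity [hφ0 x])
      (by linarith)] at key
  exact key
end

section
/- Let H ∈ (1/2,1), a > 0, δ > 0 and s ≥ 0. Then (1/(2δ)) · (s^{2H} + |s−δ−a|^{2H} − |s−a|^{2H} − |s−δ|^{2H}) ≤ 2H s^{2H−1} + H (a^{2H−1} + 1). -/
/-!
With `p = 2H ∈ (1, 2)` and `G t = |t|^p - |t - a|^p`, the bracket is `G s - G (s - δ)`.
On `t ≤ s` the derivative `G' t = p (|t|^(p-2) t - |t-a|^(p-2) (t-a))` is at most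
`p (s^(p-1) + a^(p-1))`: for `t ≥ 0` each signed power is bounded separately by monotonicity,
and for `t < 0` the difference is `(a - t)^(p-1) - (-t)^(p-1) ≤ a^(p-1)` by subadditivity of
`x ↦ x^(p-1)`.
The mean value inequality then bounds the left-hand side by `H (s^(2H-1) + a^(2H-1))`.
-/

open Set

namespace Real

variable {q x : ℝ}

lemma abs_rpow_sub_one_mul_self_of_nonneg (hq : q ≠ 0) (hx : 0 ≤ x) :
    |x| ^ (q - 1) * x = x ^ q := by
  rcases hx.eq_or_lt with rfl | hx
  · simp [zero_rpow hq]
  · rw [abs_of_pos hx, rpow_sub_one hx.ne', div_mul_cancel₀ _ hx.ne']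

lemma abs_rpow_sub_one_mul_self_of_nonpos (hq : q ≠ 0) (hx : x ≤ 0) :
    |x| ^ (q - 1) * x = -(-x) ^ q := by
  rw [← abs_rpow_sub_one_mul_self_of_nonneg hq (neg_nonneg.2 hx), abs_neg]
  ring

lemma abs_rpow_sub_one_mul_self_sub_le {a s : ℝ} (hq0 : 0 < q) (hq1 : q ≤ 1) (ha : 0 ≤ a)
    (hs : 0 ≤ s) (hxs : x ≤ s) :
    |x| ^ (q - 1) * x - |x - a| ^ (q - 1) * (x - a) ≤ s ^ q + a ^ q := by
  have hsq : 0 ≤ s ^ q := rpow_nonneg hs q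
  have haq : 0 ≤ a ^ q := rpow_nonneg ha q
  rcases le_or_gt 0 x with hx | hx
  · have hx_le : x ^ q ≤ s ^ q := rpow_le_rpow hx hxs hq0.le
    have hxa_ge : -a ^ q ≤ |x - a| ^ (q - 1) * (x - a) := by
      rcases le_total 0 (x - a) with hxa | hxa
      · rw [abs_rpow_sub_one_mul_self_of_nonneg hq0.ne' hxa]
        linarith [rpow_nonneg hxa q]
      · rw [abs_rpow_sub_one_mul_self_of_nonpos hq0.ne' hxa, neg_le_neg_iff]
        exact rpow_le_rpow (by linarith) (by linarith) hq0.le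
    rw [abs_rpow_sub_one_mul_self_of_nonneg hq0.ne' hx]
    linarith
  · have hsub : (a + -x) ^ q ≤ a ^ q + (-x) ^ q :=
      rpow_add_le_add_rpow ha (by linarith) hq0.le hq1
    rw [abs_rpow_sub_one_mul_self_of_nonpos hq0.ne' hx.le,
      abs_rpow_sub_one_mul_self_of_nonpos hq0.ne' (by linarith), neg_sub, sub_eq_add_neg a x]
    linarith

end Real

open Real

lemma abs_rpow_mixed_difference_le {p a s δ : ℝ} (hp1 : 1 < p) (hp2 : p ≤ 2) (ha : 0 ≤ a)
    (hs : 0 ≤ s) (hδ : 0 ≤ δ) :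
    (|s| ^ p - |s - a| ^ p) - (|s - δ| ^ p - |s - δ - a| ^ p)
      ≤ p * (s ^ (p - 1) + a ^ (p - 1)) * δ := by
  set G : ℝ → ℝ := fun t ↦ |t| ^ p - |t - a| ^ p
  have hG (t : ℝ) : HasDerivAt G (p * |t| ^ (p - 2) * t - p * |t - a| ^ (p - 2) * (t - a)) t :=
    (hasDerivAt_abs_rpow t hp1).sub ((hasDerivAt_abs_rpow (t - a) hp1).comp_sub_const t a)
  have hG'_le (t : ℝ) (ht : t ∈ interior (Iic s)) :
      deriv G t ≤ p * (s ^ (p - 1) + a ^ (p - 1)) := by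
    rw [interior_Iic] at ht
    have hbound := abs_rpow_sub_one_mul_self_sub_le (q := p - 1) (by linarith) (by linarith) ha
      hs ht.le
    rw [show p - 1 - 1 = p - 2 by ring] at hbound
    calc deriv G t = p * (|t| ^ (p - 2) * t - |t - a| ^ (p - 2) * (t - a)) := by
          rw [(hG t).deriv]; ring
      _ ≤ p * (s ^ (p - 1) + a ^ (p - 1)) := by gcongr
  have hG_diff : Differentiable ℝ G := fun t ↦ (hG t).differentiableAt
  have := (convex_Iic s).image_sub_le_mul_sub_of_deriv_le hG_diff.continuous.continuousOn
    hG_diff.differentiableOn hG'_le (s - δ) (by simpa using hδ) s self_mem_Iic (by linarith)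
  simpa only [G, sub_sub_cancel] using this

/-- For `H ∈ (1/2,1)`, `a > 0`, `δ > 0`, `s ≥ 0`:
`(1/(2δ))(s^{2H} + |s-δ-a|^{2H} - |s-a|^{2H} - |s-δ|^{2H}) ≤ 2H s^{2H-1} + H(a^{2H-1}+1)`. -/
theorem fbm_increment_bound (H a δ s : ℝ) (hH : 1 / 2 < H) (hH1 : H < 1)
    (ha : 0 < a) (hδ : 0 < δ) (hs : 0 ≤ s) :
    (1 / (2 * δ)) * (s ^ (2 * H) + |s - δ - a| ^ (2 * H)
        - |s - a| ^ (2 * H) - |s - δ| ^ (2 * H))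
      ≤ 2 * H * s ^ (2 * H - 1) + H * (a ^ (2 * H - 1) + 1) := by
  have hH0 : 0 < H := by linarith
  have key := abs_rpow_mixed_difference_le (p := 2 * H) (by linarith) (by linarith) ha.le hs hδ.le
  rw [abs_of_nonneg hs] at key
  have hsδ : 0 ≤ H * s ^ (2 * H - 1) * δ := by have := rpow_nonneg hs (2 * H - 1); positivity
  rw [one_div, inv_mul_le_iff₀ (by positivity)]
  nlinarith [mul_pos hH0 hδ]
end
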